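/- arXiv:1903.07328 — 2 statements merged into one kernel-verified Lean document; each statement's English description precedes it below -/
import Mathlib

section
/- Let A be a parametric timed automaton over the alphabet Σ ⊔ {$} and let w be a timed word over Σ with timestamps τ_1 < … < τ_{|w|}. For indices 1 ≤ i ≤ j ≤ |w|, let C_{i,j} be the set of pairs (ℓ,v) of a location ℓ of A and a parameter valuation v such that there exists a real t with 0 ≤ t < τ_i and w(i,j) − t ∈ L(A_ℓ[v]). Then for every integer n ≥ 1 with i + n ≤ |w|: if there exists (ℓ,v) ∈ C_{i,j} with v ∉ V_{ℓ,n}, then the match set M(w,A) contains no triple (t₀,t′,v′) with τ_{i+n−1} ≤ t₀ < τ_{i+n}. -/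
open scoped Classical NNRat

namespace PTPM

/-- Timed words over an alphabet `α`: finite sequences of (letter, timestamp). -/
abbrev TWord (α : Type*) := List (α × ℝ)

/-- Well-formedness of a timed word: positive, strictly increasing timestamps. -/
def IsTW {α : Type*} (w : TWord α) : Prop :=
  (∀ p ∈ w, 0 < p.2) ∧ w.Chain' (fun p q => p.2 < q.2)

/-- `T(Σ)`: the set of timed words over `α`. -/
def TW (α : Type*) : Set (TWord α) := {w | IsTW w}

/-- `T^n(Σ)`: the set of timed words over `α` of length `n`. -/
def TWn (α : Type*) (n : ℕ) : Set (TWord α) := {w | IsTW w ∧ w.length = n}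

/-- The shift `w + s` of a timed word. -/
def shift {α : Type*} (w : TWord α) (s : ℝ) : TWord α := w.map fun p => (p.1, p.2 + s)

/-- Last timestamp of a timed word (`0` for the empty word). -/
def lastT {α : Type*} (w : TWord α) : ℝ := (w.getLast?.map Prod.snd).getD 0

/-- Non-absorbing concatenation `w · w'`. -/
def ncat {α : Type*} (w w' : TWord α) : TWord α := w ++ shift w' (lastT w)

/-- Non-absorbing concatenation lifted to sets of timed words. -/
def ncatS {α : Type*} (W W' : Set (TWord α)) : Set (TWord α) :=
  {u | ∃ w ∈ W, ∃ w' ∈ W', u = ncat w w'}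

/-- `τ_k`, the `k`-th timestamp (1-indexed), with `τ_0 = 0`. -/
def tau {α : Type*} (w : TWord α) (k : ℕ) : ℝ := lastT (w.take k)

/-- The subsequence `w(i,j)` (1-indexed, both inclusive; empty if `i > j`). -/
def sub {α : Type*} (w : TWord α) (i j : ℕ) : TWord α := (w.take j).drop (i - 1)

/-- Letter at position `k` (1-indexed), if any. -/
def letterAt {α : Type*} (w : TWord α) (k : ℕ) : Option α := w[k - 1]?.map Prod.fst

/-- Embedding of timed words over `Σ` into timed words over `Σ ⊔ {$}`;
the terminal character `$` is modelled by `none`. -/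
def liftW {α : Type*} (w : TWord α) : TWord (Option α) := w.map fun p => (some p.1, p.2)

/-- `T(Σ)` viewed inside the alphabet `Σ ⊔ {$}`. -/
def TWl (α : Type*) : Set (TWord (Option α)) := liftW '' TW α

/-- `T^n(Σ)` viewed inside the alphabet `Σ ⊔ {$}`. -/
def TWln (α : Type*) (n : ℕ) : Set (TWord (Option α)) := liftW '' TWn α n

/-- The segment `w|_(t,t')`, a timed word over `Σ ⊔ {$}`. -/
noncomputable def seg {α : Type*} (w : TWord α) (t t' : ℝ) : TWord (Option α) :=
  (w.filter fun p => decide (t < p.2 ∧ p.2 < t')).map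
      (fun p => ((some p.1 : Option α), p.2 - t))
    ++ [((none : Option α), t' - t)]

/-- `L_{-$}`: the words of `L` with the last element removed. -/
def minusDollar {β : Type*} (L : Set (TWord β)) : Set (TWord β) :=
  {u | ∃ x ∈ L, x ≠ [] ∧ u = x.dropLast}

/-- Untimed projection of a timed word. -/
def untimed {α : Type*} (w : TWord α) : List α := w.map Prod.fst

/-- Untimed projection of a set of timed words. -/
def untimedS {α : Type*} (W : Set (TWord α)) : Set (List α) := untimed '' W

/-- `U · Σ*`: the set of finite words having a prefix in `U`. -/
def prefSet {σ : Type*} (U : Set (List σ)) : Set (List σ) := {x | ∃ u ∈ U, ∃ s, x = u ++ s}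

/-- `Ŷ = {y + s | y ∈ Y, s ≥ 0}`. -/
def hatS {α : Type*} (Y : Set (TWord α)) : Set (TWord α) :=
  {u | ∃ y ∈ Y, ∃ s : ℝ, 0 ≤ s ∧ u = shift y s}

/-- Comparison operators `⋈ ∈ {<, ≤, =, ≥, >}`. -/
inductive Cmp | lt | le | eq | ge | gt

def Cmp.eval : Cmp → ℝ → ℝ → Prop
  | .lt, a, b => a < b
  | .le, a, b => a ≤ b
  | .eq, a, b => a = b
  | .ge, a, b => b ≤ a
  | .gt, a, b => b < a

/-- Atomic guard constraints `x ⋈ d` (`d ∈ ℕ`) and `x ⋈ p` (`p` a parameter). -/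
inductive Atom (C P : Type*)
  | nat (x : C) (op : Cmp) (d : ℕ)
  | par (x : C) (op : Cmp) (p : P)

/-- A guard: a finite conjunction of atomic constraints. -/
abbrev Guard (C P : Type*) := List (Atom C P)

def Atom.sat {C P : Type*} (μ : C → ℝ) (v : P → ℚ≥0) : Atom C P → Prop
  | .nat x op d => op.eval (μ x) (d : ℝ)
  | .par x op p => op.eval (μ x) ((v p : ℚ) : ℝ)

/-- `μ ⊨ v(g)`. -/
def Guard.sat {C P : Type*} (μ : C → ℝ) (v : P → ℚ≥0) (g : Guard C P) : Prop :=
  ∀ a ∈ g, a.sat μ v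

def Atom.mapCP {C P C' P' : Type*} (fc : C → C') (fp : P → P') : Atom C P → Atom C' P'
  | .nat x op d => .nat (fc x) op d
  | .par x op p => .par (fc x) op (fp p)

def Guard.mapCP {C P C' P' : Type*} (fc : C → C') (fp : P → P') (g : Guard C P) :
    Guard C' P' :=
  g.map (Atom.mapCP fc fp)

/-- Parametric timed automaton with alphabet `α`, locations `L`, clocks `C`, parameters `P`.
An edge `(ℓ, g, a, R, ℓ')` has source `ℓ`, guard `g`, action `a`, resets `R`, target `ℓ'`. -/
structure PTA (α L C P : Type*) where
  init : L
  acc : Set L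
  edges : Set (L × Guard C P × α × Set C × L)
  finEdges : edges.Finite

/-- Reset of the clocks in `R` to `0`. -/
noncomputable def resetv {C : Type*} (μ : C → ℝ) (R : Set C) : C → ℝ :=
  fun x => if x ∈ R then 0 else μ x

/-- `Steps A v ℓ μ τ w ℓ'`: from configuration (location `ℓ`, clock valuation `μ`,
absolute time `τ`) there is a run of `A[v]` reading the timed word `w` and ending in `ℓ'`. -/
inductive Steps {α L C P : Type*} (A : PTA α L C P) (v : P → ℚ≥0) :
    L → (C → ℝ) → ℝ → TWord α → L → Prop
  | refl (ℓ : L) (μ : C → ℝ) (τ : ℝ) : Steps A v ℓ μ τ [] ℓ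
  | step {ℓ : L} {μ : C → ℝ} {τ : ℝ} {g : Guard C P} {a : α} {R : Set C} {ℓ' ℓ'' : L}
      {d : ℝ} {w : TWord α}
      (hd : 0 ≤ d)
      (he : (ℓ, g, a, R, ℓ') ∈ A.edges)
      (hg : Guard.sat (fun x => μ x + d) v g)
      (h : Steps A v ℓ' (resetv (fun x => μ x + d) R) (τ + d) w ℓ'') :
      Steps A v ℓ μ τ ((a, τ + d) :: w) ℓ''

/-- The language `L(A[v])`: associated words of accepting runs that are timed words. -/
def lang {α L C P : Type*} (A : PTA α L C P) (v : P → ℚ≥0) : Set (TWord α) :=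
  {w | IsTW w ∧ ∃ ℓ ∈ A.acc, Steps A v A.init (fun _ => 0) 0 w ℓ}

/-- `A_ℓ`: the PTA `A` with accepting set `{ℓ}`. -/
def PTA.locAcc {α L C P : Type*} (A : PTA α L C P) (ℓ : L) : PTA α L C P :=
  { A with acc := {ℓ} }

/-- The match set `M(w, A)`. -/
def matchSet {α L C P : Type*} (w : TWord α) (A : PTA (Option α) L C P) :
    Set (ℝ × ℝ × (P → ℚ≥0)) :=
  {x | 0 ≤ x.1 ∧ x.1 < x.2.1 ∧ seg w x.1 x.2.1 ∈ lang A x.2.2}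

/-- `V_{ℓ,n}`. -/
def Vset {α L C P : Type*} (A : PTA (Option α) L C P) (ℓ : L) (n : ℕ) :
    Set (P → ℚ≥0) :=
  {v | ∃ v' : P → ℚ≥0,
    (ncatS (lang (A.locAcc ℓ) v) (TWl α) ∩
      ncatS (ncatS (TWln α n) (hatS (minusDollar (lang A v')))) (TWl α)).Nonempty}

/-- The KMP-style skip value `Δ_KMP(ℓ, V) = min {n ≥ 1 | V ⊆ V_{ℓ,n}}` (min ∅ = ⊤). -/
noncomputable def DeltaKMP {α L C P : Type*} (A : PTA (Option α) L C P) (ℓ : L)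
    (V : Set (P → ℚ≥0)) : ℕ∞ :=
  sInf ((fun n : ℕ => (n : ℕ∞)) '' {n : ℕ | 1 ≤ n ∧ V ⊆ Vset A ℓ n})

/-- The non-parametric KMP-style skip value `Δ'_KMP(ℓ) = min_v Δ_KMP(ℓ, {v})`. -/
noncomputable def DeltaKMP' {α L C P : Type*} (A : PTA (Option α) L C P) (ℓ : L) : ℕ∞ :=
  ⨅ v : P → ℚ≥0, DeltaKMP A ℓ {v}

/-- Untimed words over `Σ`, viewed inside `Σ ⊔ {$}`. -/
def pureW {α : Type*} (x : List (Option α)) : Prop := ∀ c ∈ x, c ≠ none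

/-- `Σ^n · U` for sets of finite untimed words. -/
def catLen {α : Type*} (n : ℕ) (U : Set (List (Option α))) : Set (List (Option α)) :=
  {y | ∃ x u, x.length = n ∧ pureW x ∧ u ∈ U ∧ y = x ++ u}

/-- `Σ^N a Σ*`: finite words of length at least `N+1` whose `(N+1)`-st letter is `a`. -/
def sigNa {α : Type*} (N : ℕ) (a : α) : Set (List (Option α)) :=
  {x | N + 1 ≤ x.length ∧ x[N]? = some (some a)}

/-- The Quick-Search-style skip value `Δ_QS(a)` (min ∅ = ⊤). -/
noncomputable def DeltaQS {α L C P : Type*} (A : PTA (Option α) L C P) (N : ℕ) (a : α) :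
    ℕ∞ :=
  sInf ((fun n : ℕ => (n : ℕ∞)) '' {n : ℕ | 1 ≤ n ∧ ∃ v : P → ℚ≥0,
    (sigNa N a ∩ catLen n (untimedS (minusDollar (lang A v)))).Nonempty})

section Helpers
variable {α : Type*}

lemma shift_shift (w : TWord α) (s r : ℝ) : shift (shift w s) r = shift w (s + r) := by
  simp [shift, List.map_map, Function.comp_def, add_assoc]

lemma shift_append (w w' : TWord α) (s : ℝ) :
    shift (w ++ w') s = shift w s ++ shift w' s := by simp [shift]

lemma liftW_append (w w' : TWord α) : liftW (w ++ w') = liftW w ++ liftW w' := by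
  simp [liftW]

lemma liftW_shift (w : TWord α) (s : ℝ) : liftW (shift w s) = shift (liftW w) s := by
  simp [liftW, shift, List.map_map, Function.comp_def]

lemma lastT_shift (w : TWord α) (hw : w ≠ []) (s : ℝ) : lastT (shift w s) = lastT w + s := by
  rw [lastT, lastT, shift, List.getLast?_map, List.getLast?_eq_getLast hw]
  simp

lemma lastT_liftW (w : TWord α) : lastT (liftW w) = lastT w := by
  rw [lastT, lastT, liftW, List.getLast?_map]
  cases w.getLast? <;> simp

lemma lastT_eq_getLast (w : TWord α) (hw : w ≠ []) : lastT w = (w.getLast hw).2 := by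
  rw [lastT, List.getLast?_eq_getLast hw]; simp

lemma tau_eq (w : TWord α) (k : ℕ) (hk : 1 ≤ k) (hk' : k ≤ w.length) :
    tau w k = (w[k-1]'(by omega)).2 := by
  have h1 : (w.take k).length = k := by simp [Nat.min_eq_left hk']
  have hne : w.take k ≠ [] := by
    intro h; rw [h] at h1; simp at h1; omega
  rw [tau, lastT, List.getLast?_eq_getElem?, h1]
  rw [List.getElem?_take, if_pos (by omega)]
  rw [List.getElem?_eq_getElem (by omega)]
  simp

lemma isTW_pairwise {w : TWord α} (hw : w.Chain' (fun p q => p.2 < q.2)) :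
    w.Pairwise (fun p q => p.2 < q.2) := by
  haveI : IsTrans (α × ℝ) (fun p q : α × ℝ => p.2 < q.2) :=
    ⟨fun a b c h1 h2 => lt_trans h1 h2⟩
  exact List.isChain_iff_pairwise.mp hw

/-- Lemma B: suffix decomposition. -/
lemma decompB (p s : TWord α) (hp : p ≠ [])
    (hc : (p ++ s).Chain' (fun a b => a.2 < b.2)) (t : ℝ) :
    liftW (shift (p ++ s) (-t)) =
      ncat (liftW (shift p (-t))) (liftW (shift s (-(lastT p)))) ∧
    liftW (shift s (-(lastT p))) ∈ TWl α := by
  have hpw := isTW_pairwise hc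
  rw [List.pairwise_append] at hpw
  have hlast : ∀ q ∈ s, lastT p < q.2 := by
    intro q hq
    rw [lastT_eq_getLast p hp]
    exact hpw.2.2 _ (List.getLast_mem hp) _ hq
  constructor
  · rw [ncat, lastT_liftW, lastT_shift _ (by simp [shift, hp]) (-t)]
    rw [← liftW_shift, shift_shift, shift_append, liftW_append,
      (by ring : -(lastT p) + (lastT p + -t) = -t)]
  · refine ⟨shift s (-(lastT p)), ⟨?_, ?_⟩, rfl⟩
    · intro q hq
      simp only [shift, List.mem_map] at hq
      obtain ⟨q', hq', rfl⟩ := hq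
      have := hlast q' hq'
      simp; linarith
    · rw [shift]; show List.IsChain _ _; rw [List.isChain_map]
      haveI : IsTrans (α × ℝ) (fun p q : α × ℝ => p.2 < q.2) :=
        ⟨fun a b c h1 h2 => lt_trans h1 h2⟩
      have : s.Chain' (fun a b => a.2 < b.2) :=
        hc.sublist (by exact (List.sublist_append_right p s))
      exact this.imp (by intro a b h; simpa using h)

lemma filter_eq_takeWhile {l : TWord α} (hl : l.Chain' (fun a b => a.2 < b.2)) (c : ℝ) :
    l.filter (fun p => decide (p.2 < c)) = l.takeWhile (fun p => decide (p.2 < c)) := by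
  induction l with
  | nil => rfl
  | cons a l ih =>
    have hpw := isTW_pairwise hl
    rw [List.pairwise_cons] at hpw
    by_cases h : a.2 < c
    · rw [List.filter_cons_of_pos (by simpa using h),
        List.takeWhile_cons_of_pos (by simpa using h), ih hl.tail]
    · rw [List.filter_cons_of_neg (by simpa using h),
        List.takeWhile_cons_of_neg (by simpa using h)]
      rw [List.filter_eq_nil_iff]
      intro q hq
      have := hpw.1 q hq
      simp; linarith

end Helpers

/-- Lemma `KMP`. -/
theorem statement1 {α L C P : Type*} [Finite α] [Finite L] [Finite C] [Finite P]
    (A : PTA (Option α) L C P) (w : TWord α) (hw : IsTW w)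
    (i j : ℕ) (hi : 1 ≤ i) (hij : i ≤ j) (hj : j ≤ w.length)
    (n : ℕ) (hn : 1 ≤ n) (hin : i + n ≤ w.length)
    (hC : ∃ (ℓ : L) (v : P → ℚ≥0),
      (∃ t : ℝ, 0 ≤ t ∧ t < tau w i ∧
        liftW (shift (sub w i j) (-t)) ∈ lang (A.locAcc ℓ) v) ∧
      v ∉ Vset A ℓ n) :
    ∀ (t₀ t' : ℝ) (v' : P → ℚ≥0),
      tau w (i + n - 1) ≤ t₀ → t₀ < tau w (i + n) → (t₀, t', v') ∉ matchSet w A := by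
  intro t₀ t' v' ht₀ ht₁ hmem
  obtain ⟨ℓ, v, ⟨t, ht0, hti, hlang⟩, hV⟩ := hC
  obtain ⟨h0, hlt, hseg⟩ := hmem
  apply hV
  haveI : IsTrans (α × ℝ) (fun p q : α × ℝ => p.2 < q.2) :=
    ⟨fun a b c h1 h2 => lt_trans h1 h2⟩
  set d := i + n - 1 with hd
  have hdw : d < w.length := by omega
  have hpw := isTW_pairwise hw.2
  have idx := List.pairwise_iff_getElem.mp hpw
  have hτi : tau w i = (w[i-1]'(by omega)).2 := tau_eq w i hi (by omega)
  have hτd : tau w d = (w[d-1]'(by omega)).2 := tau_eq w d (by omega) (by omega)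
  have hτin : tau w (i+n) = (w[d]'(by omega)).2 := tau_eq w (i+n) (by omega) hin
  -- element bounds
  have htake : ∀ p ∈ w.take d, p.2 ≤ t₀ := by
    intro p hp
    rw [List.mem_iff_getElem] at hp
    obtain ⟨k, hk, rfl⟩ := hp
    have hk' : k < d := by simpa using (lt_of_lt_of_le hk (by simp))
    rw [List.getElem_take]
    rcases Nat.lt_or_ge k (d-1) with h | h
    · have := idx k (d-1) (by omega) (by omega) h
      rw [hτd] at ht₀; linarith
    · have hkk : k = d - 1 := by omega
      subst hkk; rw [hτd] at ht₀; exact ht₀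
  have hdrop : ∀ p ∈ w.drop d, t₀ < p.2 := by
    intro p hp
    rw [List.mem_iff_getElem] at hp
    obtain ⟨k, hk, rfl⟩ := hp
    rw [List.getElem_drop]
    rcases Nat.eq_zero_or_pos k with h | h
    · subst h; rw [hτin] at ht₁; simpa using ht₁
    · have := idx d (d+k) (by omega) (by simp at hk; omega) (by omega)
      rw [hτin] at ht₁; linarith
  set x₀ : TWord α := (w.take d).drop (i-1) with hx₀def
  have hx₀len : x₀.length = n := by
    simp [hx₀def]; omega
  have hx₀ne : x₀ ≠ [] := by
    intro h; rw [h] at hx₀len; simp at hx₀len; omega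
  have hx₀el : ∀ p ∈ x₀, t < p.2 := by
    intro p hp
    rw [List.mem_iff_getElem] at hp
    obtain ⟨k, hk, rfl⟩ := hp
    rw [List.getElem_drop, List.getElem_take]
    rcases Nat.eq_zero_or_pos k with h | h
    · subst h; rw [hτi] at hti; simpa using hti
    · have hk2 : i - 1 + k < w.length := by
        have := hk; simp [hx₀def] at this; omega
      have := idx (i-1) (i-1+k) (by omega) hk2 (by omega)
      rw [hτi] at hti; linarith
  -- the filter
  set F : TWord α := w.filter (fun p => decide (t₀ < p.2 ∧ p.2 < t')) with hFdef
  set q : TWord α := (w.drop d).takeWhile (fun p => decide (p.2 < t')) with hqdef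
  set r : TWord α := (w.drop d).dropWhile (fun p => decide (p.2 < t')) with hrdef
  have chain_dropd : (w.drop d).Chain' (fun a b => a.2 < b.2) :=
    hw.2.sublist (List.drop_sublist _ _)
  have hF : F = q := by
    rw [hFdef]
    conv_lhs => rw [← List.take_append_drop d w]
    rw [List.filter_append]
    have h1 : (w.take d).filter (fun p => decide (t₀ < p.2 ∧ p.2 < t')) = [] := by
      rw [List.filter_eq_nil_iff]
      intro p hp
      have := htake p hp
      simp only [decide_eq_true_eq, not_and]
      intro hcon; linarith
    have h2 : (w.drop d).filter (fun p => decide (t₀ < p.2 ∧ p.2 < t')) = q := by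
      rw [hqdef, ← filter_eq_takeWhile chain_dropd]
      apply List.filter_congr
      intro p hp
      have := hdrop p hp
      simp [this]
    rw [h1, h2, List.nil_append]
  -- decompositions of the suffix of w
  have chain_drop : (w.drop (i-1)).Chain' (fun a b => a.2 < b.2) :=
    hw.2.sublist (List.drop_sublist _ _)
  have hsplit : w.drop (i-1) = x₀ ++ w.drop d := by
    conv_lhs => rw [← List.take_append_drop d w]
    rw [List.drop_append_of_le_length (by simp; omega)]
  have hsplit1 : w.drop (i-1) = sub w i j ++ w.drop j := by
    conv_lhs => rw [← List.take_append_drop j w]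
    rw [List.drop_append_of_le_length (by simp; omega)]
    rfl
  have hsub_ne : sub w i j ≠ [] := by
    have : (sub w i j).length = j - (i-1) := by simp [sub]; omega
    intro h; rw [h] at this; simp at this; omega
  have hp₂ : w.drop (i-1) = (x₀ ++ q) ++ r := by
    rw [hsplit, hqdef, hrdef, List.append_assoc,
      List.takeWhile_append_dropWhile]
  -- membership 1
  obtain ⟨hB1eq, hB1mem⟩ := decompB (sub w i j) (w.drop j) hsub_ne
    (hsplit1 ▸ chain_drop) t
  refine ⟨v', liftW (shift (w.drop (i-1)) (-t)), ⟨_, hlang, _, hB1mem, ?_⟩, ?_⟩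
  · rw [hsplit1]; exact hB1eq
  -- membership 2
  obtain ⟨hB2eq, hB2mem⟩ := decompB (x₀ ++ q) r (by simp [hx₀ne])
    (hp₂ ▸ chain_drop) t
  set X : TWord (Option α) := liftW (shift x₀ (-t)) with hXdef
  have hXmem : X ∈ TWln α n := by
    refine ⟨shift x₀ (-t), ⟨⟨?_, ?_⟩, by simpa [shift] using hx₀len⟩, rfl⟩
    · intro p hp
      simp only [shift, List.mem_map] at hp
      obtain ⟨p', hp', rfl⟩ := hp
      have := hx₀el p' hp'
      simp; linarith
    · rw [shift]; show List.IsChain _ _; rw [List.isChain_map]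
      have : x₀.Chain' (fun a b => a.2 < b.2) :=
        hw.2.sublist ((List.drop_sublist _ _).trans (List.take_sublist _ _))
      exact this.imp (by intro a b h; simpa using h)
  set y₀ : TWord (Option α) := liftW (shift F (-t₀)) with hy₀def
  have hy₀ : (seg w t₀ t').dropLast = y₀ := by
    rw [seg, List.dropLast_concat, hy₀def, hFdef, liftW, shift, List.map_map]
    apply List.map_congr_left
    intro p _
    simp [sub_eq_add_neg]
  set Y : TWord (Option α) := shift y₀ (t₀ - tau w d) with hYdef
  have hYmem : Y ∈ hatS (minusDollar (lang A v')) := by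
    refine ⟨y₀, ⟨seg w t₀ t', hseg, by simp [seg], hy₀.symm⟩,
      t₀ - tau w d, by linarith, rfl⟩
  have hlastx₀ : lastT x₀ = tau w d := by
    have hlen : (List.drop (i-1) (List.take d w)).length = n := by
      simpa [hx₀def] using hx₀len
    rw [hτd, lastT, hx₀def, List.getLast?_eq_getElem?, hlen,
      List.getElem?_drop, List.getElem?_take, if_pos (by omega),
      (by omega : i - 1 + (n - 1) = d - 1),
      List.getElem?_eq_getElem (by omega)]
    simp
  have hXY : ncat X Y = liftW (shift (x₀ ++ q) (-t)) := by
    rw [ncat, hXdef, lastT_liftW, lastT_shift _ hx₀ne, hlastx₀, hYdef, hy₀def,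
      liftW_shift F (-t₀), shift_shift, shift_shift]
    first
    | rw [(by ring : -t₀ + (t₀ - tau w d + (tau w d + -t)) = -t)]
    | rw [(by ring : -t₀ + (t₀ - tau w d) + (tau w d + -t) = -t)]
    rw [← liftW_shift, ← liftW_append, ← shift_append, hF]
  refine ⟨ncat X Y, ⟨X, hXmem, Y, hYmem, rfl⟩, _, hB2mem, ?_⟩
  rw [hXY, hp₂]
  exact hB2eq


end PTPM
end

section
/- Let Σ be a finite alphabet, w = (ā,τ̄) a timed word over Σ, {F_p}_{p∈I} a family of sets of timed words over Σ ⊔ {$} indexed by an arbitrary set I, and N ≥ 1 an integer such that every word in ⋃_{p∈I} (F_p)_{−$} has length at least N. Let i ≥ 1 be an index with i + N ≤ |w| and let m ∈ {1,…,N}. If a_{i+N} ≠ a′_{N−m+1} holds for every nonempty timed word (ā′,τ̄′) ∈ ⋃_{p∈I} F_p, then for every t₀ with τ_{i+m−1} ≤ t₀ < τ_{i+m}, every t′ > t₀, and every p ∈ I: w|_(t₀,t′) ∉ F_p. -/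
/-!
If `τ_n ≤ t₀ < τ_{n+1}`, the `Σ`-part of `w|_(t₀,t')` is a prefix of `w(n+1, |w|)`, because the
timestamps of `w` increase. So if the segment has at least `N` letters before `$`, its
`(N-m+1)`-st letter is `a_{n+N-m+1}`, which for `n = i+m-1` is `a_{i+N}`: a word of some `F_p` whose
`(N-m+1)`-st letter differs from `a_{i+N}` cannot be such a segment.
-/

open scoped Classical NNRat

namespace PTPM

theorem IsTW.pairwise {α : Type*} {w : TWord α} (hw : IsTW w) :
    w.Pairwise (fun p q => p.2 < q.2) :=
  List.isChain_iff_pairwise.mp hw.2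

end PTPM

theorem List.filter_prefix_of_pairwise {β : Type*} {R : β → β → Prop} {q : β → Bool}
    {l : List β} (hl : l.Pairwise R) (hq : ∀ a b, R a b → q b → q a) :
    l.filter q <+: l := by
  induction l with
  | nil => exact List.prefix_rfl
  | cons a l ih =>
    obtain ⟨ha, hl⟩ := List.pairwise_cons.mp hl
    by_cases hqa : q a
    · simpa [List.filter_cons, hqa] using ih hl
    · have : l.filter q = [] :=
        List.filter_eq_nil_iff.mpr fun b hb hqb => hqa (hq a b (ha b hb) hqb)
      simp [hqa, this]

namespace PTPM

theorem tau_succ {α : Type*} (w : TWord α) {k : ℕ} (hk : k < w.length) :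
    tau w (k + 1) = w[k].2 := by
  simp [tau, lastT, List.getLast?_eq_getElem?, Nat.min_eq_left hk]

theorem snd_le_lastT_of_mem {α : Type*} {l : TWord α} (hl : l.Pairwise (fun p q => p.2 < q.2))
    {x : α × ℝ} (hx : x ∈ l) : x.2 ≤ lastT l := by
  have hne : l ≠ [] := List.ne_nil_of_mem hx
  rw [lastT, List.getLast?_eq_some_getLast hne, Option.map_some, Option.getD_some]
  rw [← List.dropLast_append_getLast hne] at hl hx
  rcases List.mem_append.mp hx with hx | hx
  · exact (List.pairwise_append.mp hl).2.2 x hx _ (List.mem_singleton_self _) |>.le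
  · rw [List.mem_singleton.mp hx]

theorem le_tau_of_mem_take {α : Type*} {w : TWord α} (hw : IsTW w) {n : ℕ}
    {x : α × ℝ} (hx : x ∈ w.take n) : x.2 ≤ tau w n :=
  snd_le_lastT_of_mem (hw.pairwise.sublist (List.take_sublist n w)) hx

theorem tau_succ_le_of_mem_drop {α : Type*} {w : TWord α} (hw : IsTW w) {n : ℕ}
    {x : α × ℝ} (hx : x ∈ w.drop n) : tau w (n + 1) ≤ x.2 := by
  have hn : n < w.length := by
    by_contra h
    simp [List.drop_eq_nil_of_le (not_lt.mp h)] at hx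
  have hsorted := hw.pairwise.sublist (List.drop_sublist n w)
  rw [List.drop_eq_getElem_cons hn] at hx hsorted
  rw [tau_succ w hn]
  rcases List.mem_cons.mp hx with rfl | hx
  · exact le_rfl
  · exact (List.rel_of_pairwise_cons hsorted hx).le

theorem filter_window_prefix_drop {α : Type*} {w : TWord α} (hw : IsTW w) {n : ℕ} {t₀ : ℝ}
    (h₀ : tau w n ≤ t₀) (h₁ : t₀ < tau w (n + 1)) (t' : ℝ) :
    w.filter (fun p => decide (t₀ < p.2 ∧ p.2 < t')) <+: w.drop n := by
  have hsplit : w.filter (fun p => decide (t₀ < p.2 ∧ p.2 < t')) =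
      (w.take n).filter (fun p => decide (t₀ < p.2 ∧ p.2 < t')) ++
        (w.drop n).filter (fun p => decide (t₀ < p.2 ∧ p.2 < t')) := by
    rw [← List.filter_append, List.take_append_drop]
  have htake : (w.take n).filter (fun p => decide (t₀ < p.2 ∧ p.2 < t')) = [] :=
    List.filter_eq_nil_iff.mpr fun x hx => by
      have := le_tau_of_mem_take hw hx
      simp only [decide_eq_true_eq, not_and, not_lt]
      intro h; linarith
  have hdrop : (w.drop n).filter (fun p => decide (t₀ < p.2 ∧ p.2 < t')) =
      (w.drop n).filter (fun p => decide (p.2 < t')) :=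
    List.filter_congr fun x hx => by
      simp [h₁.trans_le (tau_succ_le_of_mem_drop hw hx)]
  rw [hsplit, htake, List.nil_append, hdrop]
  exact List.filter_prefix_of_pairwise (hw.pairwise.sublist (List.drop_sublist n w))
    fun a b hab hb => by simp only [decide_eq_true_eq] at hb ⊢; exact hab.trans hb

theorem letterAt_seg {α : Type*} {w : TWord α} (hw : IsTW w) {n : ℕ} {t₀ t' : ℝ}
    (h₀ : tau w n ≤ t₀) (h₁ : t₀ < tau w (n + 1)) {k : ℕ}
    (hk : k < (seg w t₀ t').dropLast.length) :
    letterAt (seg w t₀ t') (k + 1) = (letterAt w (n + k + 1)).map some := by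
  have hpre := filter_window_prefix_drop hw h₀ h₁ t'
  simp only [seg, List.dropLast_concat, List.length_map] at hk
  have hkd : k < (w.drop n).length := hk.trans_le hpre.length_le
  rw [letterAt, letterAt, seg, Nat.add_sub_cancel, Nat.add_sub_cancel, ← List.getElem?_drop,
    List.getElem?_append_left (by rwa [List.length_map]), List.getElem?_map,
    List.getElem?_eq_getElem hk, List.getElem?_eq_getElem hkd, hpre.getElem hk]
  rfl

theorem statement9_general {α : Type*} {I : Type*} (w : TWord α) (hw : IsTW w)
    (F : I → Set (TWord (Option α)))
    (N : ℕ)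
    (hlen : ∀ p : I, ∀ u ∈ minusDollar (F p), N ≤ u.length)
    (i : ℕ)
    (a : α) (ha : letterAt w (i + N) = some a)
    (m : ℕ) (hm : 1 ≤ m) (hmN : m ≤ N)
    (hdiff : ∀ p : I, ∀ u ∈ F p, u ≠ [] → letterAt u (N - m + 1) ≠ some (some a)) :
    ∀ t₀ : ℝ, tau w (i + m - 1) ≤ t₀ → t₀ < tau w (i + m) →
      ∀ t' : ℝ, t₀ < t' → ∀ p : I, seg w t₀ t' ∉ F p := by
  intro t₀ h₀ h₁ t' _ p hmem
  have h₁' : t₀ < tau w (i + m - 1 + 1) := by rwa [Nat.sub_add_cancel (by omega)]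
  have hne : seg w t₀ t' ≠ [] := by simp [seg]
  have hN : N ≤ (seg w t₀ t').dropLast.length := hlen p _ ⟨_, hmem, hne, rfl⟩
  refine hdiff p _ hmem hne ?_
  rw [letterAt_seg hw h₀ h₁' (by omega), show i + m - 1 + (N - m) + 1 = i + N by omega, ha]
  rfl

/-- abstract Quick-Search-style skipping principle for families of
specifications. -/
theorem statement9 {α : Type*} [Finite α] {I : Type*} (w : TWord α) (hw : IsTW w)
    (F : I → Set (TWord (Option α)))
    (N : ℕ) (hN : 1 ≤ N)
    (hlen : ∀ p : I, ∀ u ∈ minusDollar (F p), N ≤ u.length)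
    (i : ℕ) (hi : 1 ≤ i) (hiN : i + N ≤ w.length)
    (a : α) (ha : letterAt w (i + N) = some a)
    (m : ℕ) (hm : 1 ≤ m) (hmN : m ≤ N)
    (hdiff : ∀ p : I, ∀ u ∈ F p, u ≠ [] → letterAt u (N - m + 1) ≠ some (some a)) :
    ∀ t₀ : ℝ, tau w (i + m - 1) ≤ t₀ → t₀ < tau w (i + m) →
      ∀ t' : ℝ, t₀ < t' → ∀ p : I, seg w t₀ t' ∉ F p :=
  statement9_general w hw F N hlen i a ha m hm hmN hdiff

end PTPM
end
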